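/- Let m ≥ 2 and let M_1, …, M_m be invertible real N×N matrices, with indices taken modulo m. Let J := { q ∈ {1,…,m} : M_q has at least one strictly negative entry }; assume J is nonempty and that q ∈ J implies q+1 ∉ J (so that no two cyclically consecutive matrices have negative entries; matrices not in J have all entries nonnegative). Suppose the full cyclic product M^{(1)} is diagonalizable over ℂ and has an algebraically simple complex eigenvalue λ_c with |λ_c| ≠ 1 and |μ| < |λ_c| for every other complex eigenvalue μ. Then ℓ(U^{-∞}(M^{(j)})) > 0 for every j ∈ {1,…,m} if and only if ℓ(U^{-∞}(M^{(q+1)})) > 0 for every q ∈ J. -/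

import Mathlib

open Matrix MeasureTheory Filter Set

noncomputable section

/-- `U^{-∞}(M)`: points of the open negative orthant all of whose iterates under `M`
tend to `-∞` in every coordinate. -/
def UnegInf {N : ℕ} (M : Matrix (Fin N) (Fin N) ℝ) : Set (Fin N → ℝ) :=
  {y | (∀ i, y i < 0) ∧ ∀ i, Tendsto (fun k : ℕ => ((M ^ k) *ᵥ y) i) atTop atBot}

/-- `μ ∈ ℂ` is an eigenvalue of the real matrix `M` regarded as a complex matrix. -/
def IsCEigenvalue {N : ℕ} (M : Matrix (Fin N) (Fin N) ℝ) (μ : ℂ) : Prop :=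
  ∃ v : Fin N → ℂ, v ≠ 0 ∧ (M.map Complex.ofReal) *ᵥ v = μ • v

/-- `M` is diagonalizable over `ℂ`: `ℂ^N` has a basis of eigenvectors of `M`. -/
def DiagonalizableOverC {N : ℕ} (M : Matrix (Fin N) (Fin N) ℝ) : Prop :=
  ∃ b : Module.Basis (Fin N) ℂ (Fin N → ℂ), ∀ i, ∃ μ : ℂ,
    (M.map Complex.ofReal) *ᵥ (b i) = μ • (b i)

/-- Cyclic product of `d` of the matrices `M_j, M_{j+1}, …` (indices mod `m`),
with `M_j` applied first (i.e. `M_{j+d-1} ⋯ M_{j+1} M_j`). -/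
def cycProd {N m : ℕ} (M : Fin m → Matrix (Fin N) (Fin N) ℝ) (j : Fin m) (d : ℕ) :
    Matrix (Fin N) (Fin N) ℝ :=
  (List.range d).foldl
    (fun A i => M ⟨(j.val + i) % m, Nat.mod_lt _ (lt_of_le_of_lt (Nat.zero_le _) j.isLt)⟩ * A) 1

/-- The full return matrix `M^{(j)} = M_{j-1}⋯M_{j+1}M_j` (all `m` matrices in cyclic
order, `M_j` applied first). -/
def Mfull {N m : ℕ} (M : Fin m → Matrix (Fin N) (Fin N) ℝ) (j : Fin m) :
    Matrix (Fin N) (Fin N) ℝ :=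
  cycProd M j m

/-- The partial-turn matrix `M_{(l,j)} = M_l ⋯ M_j` in cyclic order (`M_j` applied
first, wrapping around if `l < j`); for `l = j` it is just `M_j`. -/
def Mpartial {N m : ℕ} (M : Fin m → Matrix (Fin N) (Fin N) ℝ) (l j : Fin m) :
    Matrix (Fin N) (Fin N) ℝ :=
  cycProd M j ((l.val + m - j.val) % m + 1)

/-- The cyclic successor `q + 1 (mod m)` of an index `q`. -/
def finSucc {m : ℕ} (q : Fin m) : Fin m :=
  ⟨(q.val + 1) % m, Nat.mod_lt _ (lt_of_le_of_lt (Nat.zero_le _) q.isLt)⟩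

/-- The matrix `M_q` has at least one strictly negative entry. -/
def HasNegEntry {N m : ℕ} (M : Fin m → Matrix (Fin N) (Fin N) ℝ) (q : Fin m) : Prop :=
  ∃ i j, M q i j < 0

/-! If `M_j` has nonnegative entries, then `M_j` semiconjugates `M^{(j)}` to
`M^{(j+1)}` and maps `U^{-∞}(M^{(j)})` into `U^{-∞}(M^{(j+1)})`; being invertible, it maps a
set of positive measure to one of positive measure. Starting from an index `q + 1` with
`q ∈ J`, positivity therefore propagates around the cycle, through the nonnegative matrices
by this argument and past each `q' ∈ J` by the hypothesis at `q' + 1`. -/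

lemma sum_mul_le_mul_of_nonneg_of_nonpos {ι : Type*} [Fintype ι] {w x : ι → ℝ}
    (hw : ∀ b, 0 ≤ w b) (hx : ∀ b, x b ≤ 0) (b₀ : ι) :
    ∑ b, w b * x b ≤ w b₀ * x b₀ := by
  have h := Finset.single_le_sum (f := fun b => -(w b * x b))
    (fun b _ => neg_nonneg.2 (mul_nonpos_of_nonneg_of_nonpos (hw b) (hx b)))
    (Finset.mem_univ b₀)
  simp only [Finset.sum_neg_distrib] at h
  linarith

namespace Matrix

variable {N : ℕ} {A B B' : Matrix (Fin N) (Fin N) ℝ}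

lemma exists_pos_of_nonneg_of_det_ne_zero (hA : ∀ a b, 0 ≤ A a b) (hdet : A.det ≠ 0)
    (a : Fin N) : ∃ b, 0 < A a b := by
  by_contra! h
  exact hdet (det_eq_zero_of_row_eq_zero a fun b => le_antisymm (h b) (hA a b))

lemma mulVec_apply_le_of_nonneg {y : Fin N → ℝ} (hA : ∀ a b, 0 ≤ A a b) (hy : ∀ b, y b ≤ 0)
    (a b : Fin N) : (A *ᵥ y) a ≤ A a b * y b :=
  sum_mul_le_mul_of_nonneg_of_nonpos (hA a) hy b

lemma mapsTo_mulVec_UnegInf (hA : ∀ a b, 0 ≤ A a b) (hrow : ∀ a, ∃ b, 0 < A a b)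
    (hAB : SemiconjBy A B B') : MapsTo (A *ᵥ ·) (UnegInf B) (UnegInf B') := by
  rintro y ⟨hneg, htend⟩
  have hpow : ∀ k : ℕ, B' ^ k *ᵥ (A *ᵥ y) = A *ᵥ (B ^ k *ᵥ y) := fun k => by
    rw [mulVec_mulVec, mulVec_mulVec, (hAB.pow_right k).eq]
  refine ⟨fun a => ?_, fun a => ?_⟩
  · obtain ⟨b, hb⟩ := hrow a
    exact (mulVec_apply_le_of_nonneg hA (fun b => (hneg b).le) a b).trans_lt
      (mul_neg_of_pos_of_neg hb (hneg b))
  · obtain ⟨b, hb⟩ := hrow a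
    simp only [hpow]
    refine tendsto_atBot_mono' atTop ?_ ((htend b).const_mul_atBot hb)
    filter_upwards [eventually_all.2 fun b => (htend b).eventually_le_atBot 0] with k hk
    exact mulVec_apply_le_of_nonneg hA hk a b

lemma volume_UnegInf_pos_of_semiconjBy (hA : ∀ a b, 0 ≤ A a b) (hdet : A.det ≠ 0)
    (hAB : SemiconjBy A B B') (h : 0 < volume (UnegInf B)) :
    0 < volume (UnegInf B') :=
  calc 0 < volume (toLin' A '' UnegInf B) := by
        rw [Measure.addHaar_image_linearMap, LinearMap.det_toLin']
        exact ENNReal.mul_pos (by simpa using hdet) h.ne'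
    _ ≤ volume (UnegInf B') :=
        measure_mono (mapsTo_mulVec_UnegInf hA (exists_pos_of_nonneg_of_det_ne_zero hA hdet)
          hAB).image_subset

end Matrix

section CyclicProducts

variable {N m : ℕ} (M : Fin m → Matrix (Fin N) (Fin N) ℝ)

lemma cycProd_succ (j : Fin m) (d : ℕ) :
    cycProd M j (d + 1) = M ⟨(j.val + d) % m, Nat.mod_lt _ j.pos⟩ * cycProd M j d := by
  simp [cycProd, List.range_succ]

lemma cycProd_succ' (j : Fin m) (d : ℕ) :
    cycProd M j (d + 1) = cycProd M (finSucc j) d * M j := by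
  induction d with
  | zero =>
    rw [cycProd_succ]
    simp [cycProd, Nat.mod_eq_of_lt j.isLt]
  | succ d ih =>
    have hidx : (⟨(j.val + (d + 1)) % m, Nat.mod_lt _ j.pos⟩ : Fin m) =
        ⟨((finSucc j).val + d) % m, Nat.mod_lt _ j.pos⟩ := by
      ext
      simp only [finSucc, Nat.mod_add_mod]
      congr 1
      omega
    rw [cycProd_succ, ih, cycProd_succ, mul_assoc, hidx]

lemma semiconjBy_Mfull (j : Fin m) : SemiconjBy (M j) (Mfull M j) (Mfull M (finSucc j)) := by
  have hidx : (⟨(j.val + m) % m, Nat.mod_lt _ j.pos⟩ : Fin m) = j := by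
    ext
    simp [Nat.mod_eq_of_lt j.isLt]
  have h := cycProd_succ M j m
  rw [hidx, cycProd_succ'] at h
  exact h.symm

lemma not_hasNegEntry_iff (q : Fin m) : ¬ HasNegEntry M q ↔ ∀ a b, 0 ≤ M q a b := by
  simp [HasNegEntry]

lemma volume_UnegInf_Mfull_finSucc_pos {j : Fin m} (hinv : IsUnit (M j))
    (hj : ¬ HasNegEntry M j) (h : 0 < volume (UnegInf (Mfull M j))) :
    0 < volume (UnegInf (Mfull M (finSucc j))) :=
  volume_UnegInf_pos_of_semiconjBy ((not_hasNegEntry_iff M j).1 hj)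
    ((isUnit_iff_isUnit_det _).1 hinv).ne_zero (semiconjBy_Mfull M j) h

end CyclicProducts

lemma finSucc_eq_add_one {m : ℕ} [NeZero m] (a : Fin m) : finSucc a = a + 1 := by
  ext
  simp [finSucc, Fin.val_add]

open scoped Fin.NatCast in
lemma Fin.forall_of_finSucc_closed {m : ℕ} {P : Fin m → Prop} (q : Fin m) (hq : P q)
    (hsucc : ∀ i, P i → P (finSucc i)) (j : Fin m) : P j := by
  have : NeZero m := ⟨j.pos.ne'⟩
  have hiter : ∀ t : ℕ, P (q + (t : Fin m)) := fun t => by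
    induction t with
    | zero => simpa using hq
    | succ t ih => simpa [finSucc_eq_add_one, add_assoc] using hsucc _ ih
  simpa using hiter (j - q).val

/-- Lemma 3.10: with no two cyclically consecutive matrices having negative entries and
the spectral hypotheses on the full return matrix, `U^{-∞}(M^{(j)})` has positive
measure for every `j` if and only if it does for every index immediately following a
matrix with a negative entry. -/
theorem stmt6 {N m : ℕ}
    (M : Fin m → Matrix (Fin N) (Fin N) ℝ)
    (hinv : ∀ q, IsUnit (M q))
    (hJne : ∃ q, HasNegEntry M q) :
    (∀ j : Fin m, 0 < volume (UnegInf (Mfull M j))) ↔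
      (∀ q : Fin m, HasNegEntry M q → 0 < volume (UnegInf (Mfull M (finSucc q)))) := by
  refine ⟨fun h q _ => h _, fun hJ => ?_⟩
  obtain ⟨q, hq⟩ := hJne
  refine Fin.forall_of_finSucc_closed (finSucc q) (hJ q hq) fun i hi => ?_
  by_cases hi' : HasNegEntry M i
  · exact hJ i hi'
  · exact volume_UnegInf_Mfull_finSucc_pos M (hinv i) hi' hi
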